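/- arXiv:2406.01160 — 2 statements merged into one kernel-verified Lean document; each statement's English description precedes it below -/
import Mathlib

section
/- Let V be a finite set, p : V × V → [0,∞) symmetric, c : V → [0,∞), α, γ : V → [0,∞). Let f : ℕ^V → ℝ satisfy |f(η)| ≤ C·R^{∑_i η_i} for some C, R > 0. Define the boundary-driven independent random walkers generator L f(η) = ∑_{i,j ∈ V} p(i,j) [ η_i (f(η − δ_i + δ_j) − f(η)) + η_j (f(η + δ_i − δ_j) − f(η)) ] + ∑_{i ∈ V} c(i) [ α_i (f(η + δ_i) − f(η)) + γ_i η_i (f(η − δ_i) − f(η)) ], and the tensorized Poisson kernel 𝒢f(ζ) = ∑_{η ∈ ℕ^V} f(η) ∏_{i ∈ V} (ζ_i^{η_i} e^{−ζ_i}/η_i!). Then for all ζ ∈ (0,∞)^V, 𝒢(Lf)(ζ) = 𝓛(𝒢f)(ζ), where 𝓛 is the first-order differential operator 𝓛 g(ζ) = − ∑_{i,j ∈ V} p(i,j)(ζ_i − ζ_j)(∂_i − ∂_j) g(ζ) + ∑_{i ∈ V} c(i)(α_i − γ_i ζ_i) ∂_i g(ζ). (The boundary-driven independent random walkers are Poisson-intertwined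 with a deterministic evolution of the Poisson parameters.) -/
open MeasureTheory Real

variable {V : Type*} [Fintype V] [DecidableEq V]

/-- Move one particle from site `i` to site `j`. -/
def moveParticle (η : V → ℕ) (i j : V) : V → ℕ :=
  Function.update (Function.update η i (η i - 1)) j
    (Function.update η i (η i - 1) j + 1)

/-- Add a particle at site `i`. -/
def addParticle (η : V → ℕ) (i : V) : V → ℕ := Function.update η i (η i + 1)

/-- Remove a particle at site `i`. -/
def removeParticle (η : V → ℕ) (i : V) : V → ℕ := Function.update η i (η i - 1)

/-- The boundary-driven independent random walkers generator. -/
noncomputable def irwGen (p : V → V → ℝ) (c α γ : V → ℝ)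
    (f : (V → ℕ) → ℝ) (η : V → ℕ) : ℝ :=
  (∑ i : V, ∑ j : V, p i j *
    ((η i : ℝ) * (f (moveParticle η i j) - f η) +
     (η j : ℝ) * (f (moveParticle η j i) - f η))) +
  ∑ i : V, c i *
    (α i * (f (addParticle η i) - f η) +
     γ i * (η i : ℝ) * (f (removeParticle η i) - f η))

/-- The tensorized Poisson kernel: expectation of `f` under the product of Poisson
distributions with parameters `(ζ_i)_{i∈V}`. -/
noncomputable def poissonKernelV (f : (V → ℕ) → ℝ) (ζ : V → ℝ) : ℝ :=
  ∑' η : V → ℕ, f η * ∏ i : V, ζ i ^ η i * Real.exp (-ζ i) / (η i).factorial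

/-- Partial derivative in the `i`-th coordinate. -/
noncomputable def pderivV (i : V) (g : (V → ℝ) → ℝ) (ζ : V → ℝ) : ℝ :=
  deriv (fun t => g (Function.update ζ i t)) (ζ i)

/-- The deterministic (first-order) intertwined generator of the boundary-driven
independent random walkers. -/
noncomputable def irwFlowGen (p : V → V → ℝ) (c α γ : V → ℝ)
    (g : (V → ℝ) → ℝ) (ζ : V → ℝ) : ℝ :=
  -(∑ i : V, ∑ j : V, p i j * (ζ i - ζ j) * (pderivV i g ζ - pderivV j g ζ)) +
  ∑ i : V, c i * (α i - γ i * ζ i) * pderivV i g ζ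

open Finset Function

/-!
Write `ζ^η / η! = ∏ i, ζ i ^ η i / (η i)!`, so that `𝒢f(ζ) = exp (-∑ i, ζ i) · ∑_η f(η) ζ^η / η!`.
For `η_i ≥ 1` these weights satisfy `η_i ζ^η / η! = ζ_i ζ^(η - δ_i) / (η - δ_i)!` and
`∂_i (ζ^η / η!) = ζ^(η - δ_i) / (η - δ_i)!`, while for `η_i = 0` they do not depend on `ζ_i`.
After reindexing `η = ξ + δ_i`, the first identity expresses `𝒢(Lf)` through `𝒢f` and the
`𝒢(f(· + δ_i))`; the second, together with the factor `exp (-∑ i, ζ i)`, gives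
`∂_i 𝒢f = 𝒢(f(· + δ_i)) - 𝒢f`, and both sides become the same combination.
Exponential growth of `f` makes every series absolutely summable, locally uniformly in `ζ`,
which justifies differentiating term by term.
-/

section ExpSeries

variable {ι : Type*} [Fintype ι]

theorem summable_fintype_prod_of_nonneg {u : ι → ℕ → ℝ} (h0 : ∀ i n, 0 ≤ u i n)
    (hu : ∀ i, Summable (u i)) : Summable fun x : ι → ℕ => ∏ i, u i (x i) := by
  classical
  refine summable_of_sum_le (c := ∏ i, ∑' n, u i n)
    (fun x => prod_nonneg fun i _ => h0 i (x i)) fun s => ?_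
  calc ∑ x ∈ s, ∏ i, u i (x i)
      ≤ ∑ x ∈ Fintype.piFinset fun i => s.image (· i), ∏ i, u i (x i) :=
        sum_le_sum_of_subset_of_nonneg
          (fun x hx => Fintype.mem_piFinset.2 fun i => mem_image_of_mem _ hx)
          fun x _ _ => prod_nonneg fun i _ => h0 i (x i)
    _ = ∏ i, ∑ n ∈ s.image (· i), u i n := (prod_univ_sum _ _).symm
    _ ≤ ∏ i, ∑' n, u i n :=
        prod_le_prod (fun i _ => sum_nonneg fun n _ => h0 i n)
          fun i _ => (hu i).sum_le_tsum _ fun n _ => h0 i n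

noncomputable def expSeriesTerm (ζ : ι → ℝ) (η : ι → ℕ) : ℝ :=
  ∏ i, ζ i ^ η i / (η i).factorial

noncomputable def expGenFun (f : (ι → ℕ) → ℝ) (ζ : ι → ℝ) : ℝ :=
  ∑' η, f η * expSeriesTerm ζ η

theorem expSeriesTerm_nonneg {ζ : ι → ℝ} (hζ : ∀ i, 0 ≤ ζ i) (η : ι → ℕ) :
    0 ≤ expSeriesTerm ζ η :=
  prod_nonneg fun i _ => div_nonneg (pow_nonneg (hζ i) _) (Nat.cast_nonneg _)

theorem summable_expSeriesTerm {ζ : ι → ℝ} (hζ : ∀ i, 0 ≤ ζ i) :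
    Summable (expSeriesTerm ζ) :=
  summable_fintype_prod_of_nonneg (u := fun i n => ζ i ^ n / n.factorial)
    (fun i n => div_nonneg (pow_nonneg (hζ i) n) (Nat.cast_nonneg _))
    fun i => Real.summable_pow_div_factorial (ζ i)

theorem abs_expSeriesTerm (ζ : ι → ℝ) (η : ι → ℕ) :
    |expSeriesTerm ζ η| = expSeriesTerm (fun i => |ζ i|) η := by
  simp [expSeriesTerm, Finset.abs_prod, abs_div, abs_pow]

theorem pow_sum_mul_expSeriesTerm (r : ℝ) (ζ : ι → ℝ) (η : ι → ℕ) :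
    r ^ (∑ i, η i) * expSeriesTerm ζ η = expSeriesTerm (r • ζ) η := by
  simp only [expSeriesTerm, ← prod_pow_eq_pow_sum, ← prod_mul_distrib, Pi.smul_apply,
    smul_eq_mul, mul_pow, mul_div_assoc]

def ExpGrowth (f : (ι → ℕ) → ℝ) : Prop :=
  ∃ C R : ℝ, ∀ η, |f η| ≤ C * R ^ (∑ i, η i)

theorem ExpGrowth.summable {f : (ι → ℕ) → ℝ} (hf : ExpGrowth f) (ζ : ι → ℝ) :
    Summable fun η => f η * expSeriesTerm ζ η := by
  obtain ⟨C, R, hCR⟩ := hf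
  have habs : ∀ i, 0 ≤ |ζ i| := fun i => abs_nonneg _
  refine .of_norm_bounded ((summable_expSeriesTerm (ζ := |R| • fun i => |ζ i|)
    fun i => mul_nonneg (abs_nonneg R) (habs i)).mul_left |C|) fun η => ?_
  have hf : |f η| ≤ |C| * |R| ^ (∑ i, η i) :=
    (hCR η).trans ((le_abs_self _).trans_eq (by rw [abs_mul, abs_pow]))
  calc ‖f η * expSeriesTerm ζ η‖ = |f η| * expSeriesTerm (fun i => |ζ i|) η := by
        rw [Real.norm_eq_abs, abs_mul, abs_expSeriesTerm]
    _ ≤ |C| * |R| ^ (∑ i, η i) * expSeriesTerm (fun i => |ζ i|) η :=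
        mul_le_mul_of_nonneg_right hf (expSeriesTerm_nonneg habs η)
    _ = |C| * expSeriesTerm (|R| • fun i => |ζ i|) η := by
        rw [mul_assoc, pow_sum_mul_expSeriesTerm]

theorem ExpGrowth.hasSum {f : (ι → ℕ) → ℝ} (hf : ExpGrowth f) (ζ : ι → ℝ) :
    HasSum (fun η => f η * expSeriesTerm ζ η) (expGenFun f ζ) :=
  (hf.summable ζ).hasSum

theorem ExpGrowth.natCast_mul {f : (ι → ℕ) → ℝ} (hf : ExpGrowth f) (k : ι) :
    ExpGrowth fun η => (η k : ℝ) * f η := by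
  obtain ⟨C, R, hCR⟩ := hf
  refine ⟨C, 2 * R, fun η => ?_⟩
  have hk : (η k : ℝ) ≤ 2 ^ (∑ i, η i) := by
    exact_mod_cast (Nat.lt_two_pow_self).le.trans
      (Nat.pow_le_pow_right two_pos (single_le_sum (fun _ _ => Nat.zero_le _) (mem_univ k)))
  calc |(η k : ℝ) * f η| = η k * |f η| := by rw [abs_mul, Nat.abs_cast]
    _ ≤ 2 ^ (∑ i, η i) * (C * R ^ (∑ i, η i)) :=
        mul_le_mul hk (hCR η) (abs_nonneg _) (by positivity)
    _ = C * (2 * R) ^ (∑ i, η i) := by rw [mul_pow]; ring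

end ExpSeries

omit [Fintype V] in
theorem addParticle_apply_self (η : V → ℕ) (i : V) : addParticle η i i = η i + 1 :=
  update_self ..

omit [Fintype V] in
theorem removeParticle_addParticle (η : V → ℕ) (i : V) :
    removeParticle (addParticle η i) i = η := by
  simp [removeParticle, addParticle]

omit [Fintype V] in
theorem addParticle_removeParticle {η : V → ℕ} {i : V} (h : η i ≠ 0) :
    addParticle (removeParticle η i) i = η := by
  simp [removeParticle, addParticle, Nat.sub_add_cancel (Nat.one_le_iff_ne_zero.2 h)]

omit [Fintype V] in
theorem addParticle_injective (i : V) : Injective fun η : V → ℕ => addParticle η i :=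
  LeftInverse.injective (g := fun η => removeParticle η i) fun η => removeParticle_addParticle η i

theorem sum_addParticle (η : V → ℕ) (i : V) : ∑ j, addParticle η i j = ∑ j, η j + 1 := by
  rw [addParticle, sum_update_of_mem (mem_univ i), ← add_sum_erase _ _ (mem_univ i),
    sdiff_singleton_eq_erase, add_right_comm]

theorem ExpGrowth.comp_addParticle {f : (V → ℕ) → ℝ} (hf : ExpGrowth f) (i : V) :
    ExpGrowth fun η => f (addParticle η i) := by
  obtain ⟨C, R, hCR⟩ := hf
  exact ⟨C * R, R, fun η => (hCR _).trans_eq (by rw [sum_addParticle, pow_succ]; ring)⟩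

omit [Fintype V] in
theorem hasSum_addParticle_iff {F : (V → ℕ) → ℝ} {a : ℝ} (i : V)
    (hF : ∀ η, η i = 0 → F η = 0) :
    HasSum (fun ξ => F (addParticle ξ i)) a ↔ HasSum F a :=
  (addParticle_injective i).hasSum_iff fun η hη =>
    hF η <| by_contra fun h => hη ⟨removeParticle η i, addParticle_removeParticle h⟩

theorem expSeriesTerm_eq_mul_prod_erase (ζ : V → ℝ) (η : V → ℕ) (i : V) :
    expSeriesTerm ζ η =
      ζ i ^ η i / (η i).factorial * ∏ j ∈ univ.erase i, ζ j ^ η j / (η j).factorial :=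
  (mul_prod_erase _ _ (mem_univ i)).symm

theorem expSeriesTerm_addParticle (ζ : V → ℝ) (η : V → ℕ) (i : V) :
    ((η i : ℝ) + 1) * expSeriesTerm ζ (addParticle η i) = ζ i * expSeriesTerm ζ η := by
  have hrest : ∏ j ∈ univ.erase i, ζ j ^ addParticle η i j / (addParticle η i j).factorial =
      ∏ j ∈ univ.erase i, ζ j ^ η j / (η j).factorial :=
    prod_congr rfl fun j hj => by rw [addParticle, update_of_ne (ne_of_mem_erase hj)]
  rw [expSeriesTerm_eq_mul_prod_erase _ _ i, expSeriesTerm_eq_mul_prod_erase _ η i, hrest,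
    addParticle_apply_self, Nat.factorial_succ, pow_succ]
  have : ((η i).factorial : ℝ) ≠ 0 := by positivity
  push_cast
  field_simp

theorem expSeriesTerm_update (ζ : V → ℝ) (η : V → ℕ) (i : V) (t : ℝ) :
    expSeriesTerm (update ζ i t) η = t ^ η i * expSeriesTerm (update ζ i 1) η := by
  have hrest (s : ℝ) : ∏ j ∈ univ.erase i, update ζ i s j ^ η j / (η j).factorial =
      ∏ j ∈ univ.erase i, ζ j ^ η j / (η j).factorial :=
    prod_congr rfl fun j hj => by rw [update_of_ne (ne_of_mem_erase hj)]
  rw [expSeriesTerm_eq_mul_prod_erase _ _ i, expSeriesTerm_eq_mul_prod_erase _ _ i, hrest,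
    hrest, update_self, update_self, one_pow]
  ring

theorem hasSum_natCast_mul_removeParticle {g : (V → ℕ) → ℝ} (hg : ExpGrowth g) (ζ : V → ℝ)
    (i : V) :
    HasSum (fun η => (η i : ℝ) * g (removeParticle η i) * expSeriesTerm ζ η)
      (ζ i * expGenFun g ζ) := by
  rw [← hasSum_addParticle_iff i fun η h => by simp [h]]
  refine ((hg.hasSum ζ).mul_left (ζ i)).congr_fun fun ξ => ?_
  rw [removeParticle_addParticle, addParticle_apply_self]
  push_cast
  linear_combination g ξ * expSeriesTerm_addParticle ζ ξ i

theorem hasSum_natCast_mul {f : (V → ℕ) → ℝ} (hf : ExpGrowth f) (ζ : V → ℝ) (i : V) :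
    HasSum (fun η => (η i : ℝ) * f η * expSeriesTerm ζ η)
      (ζ i * expGenFun (fun η => f (addParticle η i)) ζ) := by
  refine (hasSum_natCast_mul_removeParticle (hf.comp_addParticle i) ζ i).congr_fun fun η => ?_
  by_cases h : η i = 0
  · simp [h]
  · rw [addParticle_removeParticle h]

theorem hasDerivAt_expSeriesTerm_update (ζ : V → ℝ) (η : V → ℕ) (i : V) (t : ℝ) :
    HasDerivAt (fun s => expSeriesTerm (update ζ i s) η)
      (η i * t ^ (η i - 1) * expSeriesTerm (update ζ i 1) η) t := by
  exact ((hasDerivAt_pow (η i) t).mul_const _).congr_of_eventuallyEq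
    (.of_forall fun s => expSeriesTerm_update ζ η i s)

theorem abs_deriv_expSeriesTerm_update_le (ζ : V → ℝ) (η : V → ℕ) (i : V) {r t : ℝ}
    (hr : 1 ≤ r) (ht : |t| ≤ r) :
    |η i * t ^ (η i - 1) * expSeriesTerm (update ζ i 1) η| ≤
      η i * |expSeriesTerm (update ζ i r) η| := by
  have hpow : |t| ^ (η i - 1) ≤ r ^ η i :=
    (pow_le_pow_left₀ (abs_nonneg t) ht _).trans (pow_le_pow_right₀ hr (Nat.sub_le _ _))
  rw [expSeriesTerm_update ζ η i r, abs_mul, abs_mul, abs_mul, Nat.abs_cast, abs_pow, abs_pow,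
    abs_of_nonneg (zero_le_one.trans hr), ← mul_assoc]
  gcongr

theorem deriv_expSeriesTerm_update_addParticle (ζ : V → ℝ) (ξ : V → ℕ) (i : V) :
    (addParticle ξ i i : ℝ) * ζ i ^ (addParticle ξ i i - 1) *
      expSeriesTerm (update ζ i 1) (addParticle ξ i) = expSeriesTerm ζ ξ := by
  have hshift := expSeriesTerm_addParticle (update ζ i 1) ξ i
  have hscale := expSeriesTerm_update ζ ξ i (ζ i)
  rw [update_self] at hshift
  rw [update_eq_self] at hscale
  rw [addParticle_apply_self, Nat.add_sub_cancel, hscale]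
  push_cast
  linear_combination ζ i ^ ξ i * hshift

theorem hasDerivAt_expGenFun_update {f : (V → ℕ) → ℝ} (hf : ExpGrowth f) (ζ : V → ℝ) (i : V) :
    HasDerivAt (fun t => expGenFun f (update ζ i t))
      (expGenFun (fun η => f (addParticle η i)) ζ) (ζ i) := by
  set r := |ζ i| + 1
  have hvalue : HasSum
      (fun η => f η * (η i * ζ i ^ (η i - 1) * expSeriesTerm (update ζ i 1) η))
      (expGenFun (fun η => f (addParticle η i)) ζ) := by
    rw [← hasSum_addParticle_iff i fun η h => by simp [h]]
    exact ((hf.comp_addParticle i).hasSum ζ).congr_fun fun ξ => by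
      rw [deriv_expSeriesTerm_update_addParticle]
  rw [← hvalue.tsum_eq]
  refine hasDerivAt_tsum_of_isPreconnected ((hf.natCast_mul i).summable (update ζ i r)).abs
    Metric.isOpen_ball (convex_ball _ _).isPreconnected
    (fun η t _ => (hasDerivAt_expSeriesTerm_update ζ η i t).const_mul (f η))
    (fun η t ht => ?_) (Metric.mem_ball_self one_pos) (by simpa using hf.summable ζ)
    (Metric.mem_ball_self one_pos)
  have htr : |t| ≤ r := by
    have := abs_sub_abs_le_abs_sub t (ζ i)
    rw [Metric.mem_ball, Real.dist_eq] at ht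
    linarith
  calc ‖f η * (η i * t ^ (η i - 1) * expSeriesTerm (update ζ i 1) η)‖
      ≤ |f η| * (η i * |expSeriesTerm (update ζ i r) η|) := by
        rw [Real.norm_eq_abs, abs_mul]
        gcongr
        exact abs_deriv_expSeriesTerm_update_le ζ η i (by simp [r]) htr
    _ = |(η i : ℝ) * f η * expSeriesTerm (update ζ i r) η| := by
        rw [abs_mul, abs_mul, Nat.abs_cast]
        ring


omit [DecidableEq V] in
theorem poissonKernelV_eq_exp_mul_expGenFun (f : (V → ℕ) → ℝ) (ζ : V → ℝ) :
    poissonKernelV f ζ = exp (-∑ i, ζ i) * expGenFun f ζ := by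
  rw [poissonKernelV, expGenFun, ← tsum_mul_left]
  refine tsum_congr fun η => ?_
  rw [← sum_neg_distrib, Real.exp_sum, expSeriesTerm, mul_left_comm, ← prod_mul_distrib]
  exact congrArg _ (prod_congr rfl fun i _ => by ring)

theorem pderivV_poissonKernelV {f : (V → ℕ) → ℝ} (hf : ExpGrowth f) (ζ : V → ℝ) (i : V) :
    pderivV i (poissonKernelV f) ζ =
      exp (-∑ j, ζ j) * (expGenFun (fun η => f (addParticle η i)) ζ - expGenFun f ζ) := by
  have hmass : HasDerivAt (fun t => ∑ j, update ζ i t j) 1 (ζ i) := by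
    simp only [sum_update_of_mem (mem_univ i)]
    exact (hasDerivAt_id _).add_const _
  have h := hmass.fun_neg.exp.fun_mul (hasDerivAt_expGenFun_update hf ζ i)
  simp only [update_eq_self] at h
  simp only [pderivV, poissonKernelV_eq_exp_mul_expGenFun, h.deriv]
  ring

theorem expGenFun_irwGen (p : V → V → ℝ) (c α γ : V → ℝ) {f : (V → ℕ) → ℝ}
    (hf : ExpGrowth f) (ζ : V → ℝ) :
    expGenFun (irwGen p c α γ f) ζ =
      (∑ i, ∑ j, p i j *
        ((ζ i * expGenFun (fun η => f (addParticle η j)) ζ -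
            ζ i * expGenFun (fun η => f (addParticle η i)) ζ) +
          (ζ j * expGenFun (fun η => f (addParticle η i)) ζ -
            ζ j * expGenFun (fun η => f (addParticle η j)) ζ))) +
      ∑ i, c i *
        (α i * (expGenFun (fun η => f (addParticle η i)) ζ - expGenFun f ζ) +
          γ i * (ζ i * expGenFun f ζ - ζ i * expGenFun (fun η => f (addParticle η i)) ζ)) := by
  have hmove : ∀ i j, HasSum (fun η => (η i : ℝ) * f (moveParticle η i j) * expSeriesTerm ζ η)
      (ζ i * expGenFun (fun η => f (addParticle η j)) ζ) :=
    fun i j => hasSum_natCast_mul_removeParticle (hf.comp_addParticle j) ζ i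
  have hcount := hasSum_natCast_mul hf ζ
  have hadd := fun i => (hf.comp_addParticle i).hasSum ζ
  have hremove := hasSum_natCast_mul_removeParticle hf ζ
  refine HasSum.tsum_eq <| ((hasSum_sum fun i _ => hasSum_sum fun j _ =>
    (((hmove i j).sub (hcount i)).add ((hmove j i).sub (hcount j))).mul_left (p i j)).add
    (hasSum_sum fun i _ => ((((hadd i).sub (hf.hasSum ζ)).mul_left (α i)).add
      (((hremove i).sub (hcount i)).mul_left (γ i))).mul_left (c i))).congr_fun fun η => ?_
  simp only [irwGen, add_mul, sum_mul]
  congr 1 <;> refine sum_congr rfl fun i _ => ?_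
  · exact sum_congr rfl fun j _ => by ring
  · ring

theorem irw_poisson_intertwining_general (p : V → V → ℝ) (c α γ : V → ℝ)
    (f : (V → ℕ) → ℝ) (C R : ℝ)
    (hf : ∀ η : V → ℕ, |f η| ≤ C * R ^ (∑ i : V, η i))
    (ζ : V → ℝ) :
    poissonKernelV (irwGen p c α γ f) ζ = irwFlowGen p c α γ (poissonKernelV f) ζ := by
  have hf' : ExpGrowth f := ⟨C, R, hf⟩
  simp only [irwFlowGen, pderivV_poissonKernelV hf', poissonKernelV_eq_exp_mul_expGenFun,
    expGenFun_irwGen p c α γ hf', mul_add, mul_sum, ← sum_neg_distrib]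
  congr 1 <;> refine sum_congr rfl fun i _ => ?_
  · exact sum_congr rfl fun j _ => by ring
  · ring

/-- The boundary-driven independent random walkers are Poisson-intertwined with a
deterministic evolution of the Poisson parameters. -/
theorem irw_poisson_intertwining (p : V → V → ℝ) (c α γ : V → ℝ)
    (hp : ∀ i j, 0 ≤ p i j) (hpsymm : ∀ i j, p i j = p j i)
    (hc : ∀ i, 0 ≤ c i) (hα : ∀ i, 0 ≤ α i) (hγ : ∀ i, 0 ≤ γ i)
    (f : (V → ℕ) → ℝ) (C R : ℝ) (hC : 0 < C) (hR : 0 < R)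
    (hf : ∀ η : V → ℕ, |f η| ≤ C * R ^ (∑ i : V, η i))
    (ζ : V → ℝ) (hζ : ∀ i, 0 < ζ i) :
    poissonKernelV (irwGen p c α γ f) ζ = irwFlowGen p c α γ (poissonKernelV f) ζ :=
  irw_poisson_intertwining_general p c α γ f C R hf ζ
end

section
/- For every s > 0, every n ∈ ℕ and all θ, θ* > 0, the following two Gamma-averaged reservoir input terms are equal (all integrals converging absolutely): ∫₀^∞ γ_θ(x) ( ∫₀^∞ u^{−1} e^{−u} [ (x + u θ*)^n − x^n ] du ) dx = ∫₀^∞ ∫₀^∞ γ_θ(x) γ_{θ*}(y) ( ∫₀¹ u^{−1}(1−u)^{2s−1} [ (x + u y)^n − x^n ] du ) dy dx, where γ_θ(x) = x^{2s−1} e^{−x/θ}/(θ^{2s} Γ(2s)). Consequently, the two reservoir generators of the generalized harmonic model — the one with deterministic input L^{(1)}: f ↦ ∫₀¹ u^{−1}(1−u)^{2s−1}(f((1−u)x)−f(x))du + ∫₀^∞ u^{−1}e^{−u}(f(x+uθ*)−f(x))du, and the one with Gamma-sampled input L^{(2)}: f ↦ ∫₀¹ u^{−1}(1−u)^{2s−1}(f((1−u)x)−f(x))du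 + ∫₀^∞ γ_{θ*}(y) ∫₀¹ u^{−1}(1−u)^{2s−1}(f(x+uy)−f(x))du dy — have equal Gamma-averages on all monomials: ∫ γ_θ(x) (L^{(1)}f_n)(x) dx = ∫ γ_θ(x) (L^{(2)}f_n)(x) dx for f_n(x) = x^n. -/
open MeasureTheory Real Set

/-!
`u⁻¹ ((x + u c)ⁿ - xⁿ) = ∑_{j<n} C(n, j+1) x^{n-j-1} c^{j+1} u^j`, so both input terms are
finite combinations of moments: the exponential kernel contributes `j!`, the beta kernel
`B(j+1, 2s)`, and averaging `y^{j+1}` against `γ_{θ*}` gives `θ*^{j+1} Γ(2s+j+1) / Γ(2s)`.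
Since `B(j+1, 2s) Γ(j+1+2s) = j! Γ(2s)`, the two input terms agree for every fixed `x`, before
any averaging in `x`; the mass-exit terms of the two generators coincide.
-/

/-- The Gamma(shape 2s, scale θ) density on (0,∞). -/
noncomputable def gammaDens (s θ x : ℝ) : ℝ :=
  x ^ (2 * s - 1) * Real.exp (-x / θ) / (θ ^ (2 * s) * Real.Gamma (2 * s))

lemma inv_mul_add_mul_pow_sub_pow (n : ℕ) (x c : ℝ) {u : ℝ} (hu : u ≠ 0) :
    u⁻¹ * ((x + u * c) ^ n - x ^ n) =
      ∑ j ∈ Finset.range n, (n.choose (j + 1) * x ^ (n - (j + 1)) * c ^ (j + 1)) * u ^ j := by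
  rw [add_comm, add_pow, Finset.sum_range_succ', Nat.choose_zero_right, Nat.sub_zero,
    pow_zero, one_mul, Nat.cast_one, mul_one, add_sub_cancel_right, Finset.mul_sum]
  refine Finset.sum_congr rfl fun j _ => ?_
  field_simp
  ring

section WeightedPolynomial

variable {ι : Type*} {μ : Measure ℝ} {w : ℝ → ℝ}

lemma integrable_mul_sum_mul_pow (hw : ∀ j : ℕ, Integrable (fun y => w y * y ^ j) μ)
    (t : Finset ι) (a : ι → ℝ) (e : ι → ℕ) :
    Integrable (fun y => w y * ∑ i ∈ t, a i * y ^ e i) μ := by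
  simp_rw [Finset.mul_sum, mul_left_comm (w _)]
  exact integrable_finsetSum _ fun i _ => (hw (e i)).const_mul (a i)

lemma integral_mul_sum_mul_pow (hw : ∀ j : ℕ, Integrable (fun y => w y * y ^ j) μ)
    (t : Finset ι) (a : ι → ℝ) (e : ι → ℕ) :
    ∫ y, w y * ∑ i ∈ t, a i * y ^ e i ∂μ =
      ∑ i ∈ t, a i * ∫ y, w y * y ^ e i ∂μ := by
  simp_rw [Finset.mul_sum, mul_left_comm (w _)]
  rw [integral_finsetSum _ fun i _ => (hw (e i)).const_mul (a i)]
  simp_rw [integral_const_mul]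

variable {K : ℝ → ℝ}

lemma inv_mul_add_mul_pow_sub_pow_ae_eq (h0 : ∀ᵐ u ∂μ, u ≠ 0) (n : ℕ) (x c : ℝ) :
    (fun u => u⁻¹ * K u * ((x + u * c) ^ n - x ^ n)) =ᵐ[μ] fun u => K u *
      ∑ j ∈ Finset.range n, (n.choose (j + 1) * x ^ (n - (j + 1)) * c ^ (j + 1)) * u ^ j := by
  filter_upwards [h0] with u hu
  rw [← inv_mul_add_mul_pow_sub_pow n x c hu]
  ring

lemma integrable_inv_mul_add_mul_pow_sub_pow (h0 : ∀ᵐ u ∂μ, u ≠ 0)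
    (hK : ∀ j : ℕ, Integrable (fun u => K u * u ^ j) μ) (n : ℕ) (x c : ℝ) :
    Integrable (fun u => u⁻¹ * K u * ((x + u * c) ^ n - x ^ n)) μ :=
  (integrable_mul_sum_mul_pow hK _ _ _).congr (inv_mul_add_mul_pow_sub_pow_ae_eq h0 n x c).symm

lemma integral_inv_mul_add_mul_pow_sub_pow (h0 : ∀ᵐ u ∂μ, u ≠ 0)
    (hK : ∀ j : ℕ, Integrable (fun u => K u * u ^ j) μ) (n : ℕ) (x c : ℝ) :
    ∫ u, u⁻¹ * K u * ((x + u * c) ^ n - x ^ n) ∂μ =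
      ∑ j ∈ Finset.range n,
        (n.choose (j + 1) * x ^ (n - (j + 1)) * c ^ (j + 1)) * ∫ u, K u * u ^ j ∂μ := by
  rw [integral_congr_ae (inv_mul_add_mul_pow_sub_pow_ae_eq h0 n x c),
    integral_mul_sum_mul_pow hK]

end WeightedPolynomial

lemma integrableOn_exp_neg_mul_pow (j : ℕ) :
    IntegrableOn (fun u => exp (-u) * u ^ j) (Ioi 0) := by
  simpa [← rpow_natCast] using GammaIntegral_convergent (s := j + 1) (by positivity)

lemma integral_exp_neg_mul_pow (j : ℕ) :
    ∫ u in Ioi 0, exp (-u) * u ^ j = j.factorial := by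
  simpa [← rpow_natCast, Gamma_nat_eq_factorial] using
    (Gamma_eq_integral (s := j + 1) (by positivity)).symm

lemma integrableOn_one_sub_rpow_mul_pow {b : ℝ} (hb : 0 < b) (j : ℕ) :
    IntegrableOn (fun u : ℝ => (1 - u) ^ (b - 1) * u ^ j) (Ioo 0 1) := by
  have hrpow : IntegrableOn (fun u : ℝ => (1 - u) ^ (b - 1)) (Ioo 0 1) := by
    have := (intervalIntegral.intervalIntegrable_rpow' (a := 0) (b := 1)
      (by linarith : -1 < b - 1)).comp_sub_left 1
    norm_num at this
    exact (intervalIntegrable_iff_integrableOn_Ioo_of_le zero_le_one).mp this.symm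
  refine hrpow.mul_bdd (c := 1) (by fun_prop) ?_
  refine (ae_restrict_iff' measurableSet_Ioo).mpr (ae_of_all _ fun u hu => ?_)
  rw [norm_pow, Real.norm_of_nonneg hu.1.le]
  exact pow_le_one₀ hu.1.le hu.2.le

lemma integral_one_sub_rpow_mul_pow {b : ℝ} (hb : 0 < b) (j : ℕ) :
    ∫ u in Ioo (0 : ℝ) 1, (1 - u) ^ (b - 1) * u ^ j = ProbabilityTheory.beta (j + 1) b := by
  rw [ProbabilityTheory.beta_eq_betaIntegralReal _ _ (by positivity) hb, Complex.betaIntegral,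
    intervalIntegral.integral_of_le zero_le_one, ← integral_Ioc_eq_integral_Ioo,
    ← RCLike.re_to_complex, ← integral_re]
  · refine setIntegral_congr_fun measurableSet_Ioc fun t ht => ?_
    have hcpow : ((1 : ℂ) - t) ^ ((b : ℂ) - 1) = ((1 - t) ^ (b - 1) : ℝ) := by
      rw [Complex.ofReal_cpow (by linarith [ht.2])]
      push_cast
      ring_nf
    push_cast
    rw [add_sub_cancel_right, Complex.cpow_natCast, hcpow, ← Complex.ofReal_pow,
      ← Complex.ofReal_mul, RCLike.re_to_complex, Complex.ofReal_re, mul_comm]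
  · exact (Complex.betaIntegral_convergent (by simp; positivity) (by simpa using hb)).1

lemma gammaDens_mul_pow {s c y : ℝ} (hy : 0 < y) (j : ℕ) :
    gammaDens s c y * y ^ j =
      (c ^ (2 * s) * Gamma (2 * s))⁻¹ * (y ^ (2 * s + j - 1) * exp (-(c⁻¹ * y))) := by
  rw [gammaDens, show 2 * s + j - 1 = (2 * s - 1) + j by ring, rpow_add hy, rpow_natCast]
  field_simp

lemma integrableOn_gammaDens_mul_pow {s c : ℝ} (hs : 0 < s) (hc : 0 < c) (j : ℕ) :
    IntegrableOn (fun y => gammaDens s c y * y ^ j) (Ioi 0) := by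
  have := integrableOn_rpow_mul_exp_neg_mul_rpow (p := 1) (s := 2 * s + j - 1) (b := c⁻¹)
    (by linarith [(Nat.cast_nonneg j : (0 : ℝ) ≤ j)]) one_pos (by positivity)
  refine IntegrableOn.congr_fun (this.const_mul (c ^ (2 * s) * Gamma (2 * s))⁻¹) (fun y hy => ?_)
    measurableSet_Ioi
  rw [gammaDens_mul_pow hy, rpow_one, neg_mul]

lemma integral_gammaDens_mul_pow {s c : ℝ} (hs : 0 < s) (hc : 0 < c) (j : ℕ) :
    ∫ y in Ioi 0, gammaDens s c y * y ^ j = c ^ j * Gamma (2 * s + j) / Gamma (2 * s) := by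
  rw [setIntegral_congr_fun measurableSet_Ioi fun y hy => gammaDens_mul_pow hy j,
    integral_const_mul, integral_rpow_mul_exp_neg_mul_Ioi (by positivity) (by positivity),
    one_div, inv_inv, rpow_add hc, rpow_natCast]
  have := Gamma_pos_of_pos (by positivity : 0 < 2 * s)
  field_simp

lemma beta_mul_Gamma_add {α β : ℝ} (hα : 0 < α) (hβ : 0 < β) :
    ProbabilityTheory.beta α β * Gamma (α + β) = Gamma α * Gamma β :=
  div_mul_cancel₀ _ (Gamma_pos_of_pos (add_pos hα hβ)).ne'

lemma ae_restrict_Ioi_ne_zero : ∀ᵐ u ∂(volume.restrict (Ioi (0 : ℝ))), u ≠ 0 :=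
  ae_restrict_of_forall_mem measurableSet_Ioi fun _ hu => ne_of_gt hu

lemma ae_restrict_Ioo_ne_zero : ∀ᵐ u ∂(volume.restrict (Ioo (0 : ℝ) 1)), u ≠ 0 :=
  ae_restrict_of_forall_mem measurableSet_Ioo fun _ hu => ne_of_gt hu.1

lemma integrableOn_expKernel_increment (n : ℕ) (x c : ℝ) :
    IntegrableOn (fun u => u⁻¹ * exp (-u) * ((x + u * c) ^ n - x ^ n)) (Ioi 0) :=
  integrable_inv_mul_add_mul_pow_sub_pow ae_restrict_Ioi_ne_zero integrableOn_exp_neg_mul_pow n x c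

lemma integral_expKernel_increment (n : ℕ) (x c : ℝ) :
    ∫ u in Ioi 0, u⁻¹ * exp (-u) * ((x + u * c) ^ n - x ^ n) =
      ∑ j ∈ Finset.range n,
        (n.choose (j + 1) * x ^ (n - (j + 1)) * c ^ (j + 1)) * j.factorial := by
  simp_rw [integral_inv_mul_add_mul_pow_sub_pow ae_restrict_Ioi_ne_zero
    integrableOn_exp_neg_mul_pow, integral_exp_neg_mul_pow]

lemma integrableOn_betaKernel_increment {b : ℝ} (hb : 0 < b) (n : ℕ) (x y : ℝ) :
    IntegrableOn (fun u => u⁻¹ * (1 - u) ^ (b - 1) * ((x + u * y) ^ n - x ^ n)) (Ioo 0 1) :=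
  integrable_inv_mul_add_mul_pow_sub_pow ae_restrict_Ioo_ne_zero
    (integrableOn_one_sub_rpow_mul_pow hb) n x y

lemma integral_betaKernel_increment {b : ℝ} (hb : 0 < b) (n : ℕ) (x y : ℝ) :
    ∫ u in Ioo 0 1, u⁻¹ * (1 - u) ^ (b - 1) * ((x + u * y) ^ n - x ^ n) =
      ∑ j ∈ Finset.range n, (n.choose (j + 1) * x ^ (n - (j + 1)) * y ^ (j + 1)) *
        ProbabilityTheory.beta (j + 1) b := by
  simp_rw [integral_inv_mul_add_mul_pow_sub_pow ae_restrict_Ioo_ne_zero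
    (integrableOn_one_sub_rpow_mul_pow hb), integral_one_sub_rpow_mul_pow hb]

lemma integral_gammaDens_mul_integral_betaKernel_increment {s c : ℝ} (hs : 0 < s) (hc : 0 < c)
    (n : ℕ) (x : ℝ) :
    ∫ y in Ioi 0, gammaDens s c y *
        ∫ u in Ioo 0 1, u⁻¹ * (1 - u) ^ (2 * s - 1) * ((x + u * y) ^ n - x ^ n) =
      ∑ j ∈ Finset.range n, (n.choose (j + 1) * x ^ (n - (j + 1)) *
        ProbabilityTheory.beta (j + 1) (2 * s)) *
          (c ^ (j + 1) * Gamma (2 * s + (j + 1 : ℕ)) / Gamma (2 * s)) := by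
  have hb : (0 : ℝ) < 2 * s := by positivity
  have hpoly : ∀ y,
      ∫ u in Ioo 0 1, u⁻¹ * (1 - u) ^ (2 * s - 1) * ((x + u * y) ^ n - x ^ n) =
      ∑ j ∈ Finset.range n, (n.choose (j + 1) * x ^ (n - (j + 1)) *
        ProbabilityTheory.beta (j + 1) (2 * s)) * y ^ (j + 1) := fun y => by
    rw [integral_betaKernel_increment hb]
    exact Finset.sum_congr rfl fun j _ => by ring
  simp_rw [hpoly]
  rw [integral_mul_sum_mul_pow (integrableOn_gammaDens_mul_pow hs hc)]
  simp_rw [integral_gammaDens_mul_pow hs hc]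

lemma integral_expKernel_increment_eq_integral_gammaDens_mul {s c : ℝ} (hs : 0 < s) (hc : 0 < c)
    (n : ℕ) (x : ℝ) :
    ∫ u in Ioi 0, u⁻¹ * exp (-u) * ((x + u * c) ^ n - x ^ n) =
      ∫ y in Ioi 0, gammaDens s c y *
        ∫ u in Ioo 0 1, u⁻¹ * (1 - u) ^ (2 * s - 1) * ((x + u * y) ^ n - x ^ n) := by
  rw [integral_expKernel_increment, integral_gammaDens_mul_integral_betaKernel_increment hs hc]
  refine Finset.sum_congr rfl fun j _ => ?_
  have hbeta := beta_mul_Gamma_add (α := j + 1) (by positivity) (by positivity : 0 < 2 * s)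
  have hΓ := Gamma_pos_of_pos (by positivity : 0 < 2 * s)
  have hfact : (j.factorial : ℝ) =
      ProbabilityTheory.beta (j + 1) (2 * s) * Gamma (j + 1 + 2 * s) / Gamma (2 * s) := by
    rw [eq_div_iff hΓ.ne', hbeta, Gamma_nat_eq_factorial]
  rw [hfact, Nat.cast_add_one, add_comm (2 * s)]
  ring

lemma integrableOn_gammaDens_mul_integral_expKernel_increment {s c : ℝ} (hs : 0 < s) (hc : 0 < c)
    (n : ℕ) (d : ℝ) :
    IntegrableOn (fun x => gammaDens s c x *
      ∫ u in Ioi 0, u⁻¹ * exp (-u) * ((x + u * d) ^ n - x ^ n)) (Ioi 0) := by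
  refine (integrable_mul_sum_mul_pow (integrableOn_gammaDens_mul_pow hs hc) (Finset.range n)
    (fun j => n.choose (j + 1) * d ^ (j + 1) * j.factorial) (fun j => n - (j + 1))).congr
    (ae_of_all _ fun x => ?_)
  dsimp only
  rw [integral_expKernel_increment]
  exact congrArg _ (Finset.sum_congr rfl fun j _ => by ring)

lemma integrableOn_gammaDens_mul_gammaDens_mul_integral_betaKernel_increment {s c d : ℝ}
    (hs : 0 < s) (hc : 0 < c) (hd : 0 < d) (n : ℕ) :
    IntegrableOn (fun q : ℝ × ℝ => gammaDens s c q.1 * gammaDens s d q.2 *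
      ∫ u in Ioo 0 1, u⁻¹ * (1 - u) ^ (2 * s - 1) * ((q.1 + u * q.2) ^ n - q.1 ^ n))
      (Ioi 0 ×ˢ Ioi 0) := by
  have hterms : Integrable (fun q : ℝ × ℝ => ∑ j ∈ Finset.range n,
      (n.choose (j + 1) * ProbabilityTheory.beta (j + 1) (2 * s)) *
        ((gammaDens s c q.1 * q.1 ^ (n - (j + 1))) * (gammaDens s d q.2 * q.2 ^ (j + 1))))
      ((volume.restrict (Ioi 0)).prod (volume.restrict (Ioi 0))) :=
    integrable_finsetSum _ fun j _ =>
      ((integrableOn_gammaDens_mul_pow hs hc _).mul_prod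
        (integrableOn_gammaDens_mul_pow hs hd _)).const_mul _
  rw [Measure.prod_restrict, ← Measure.volume_eq_prod] at hterms
  refine hterms.congr (ae_of_all _ fun q => ?_)
  dsimp only
  rw [integral_betaKernel_increment (by positivity), Finset.mul_sum]
  exact Finset.sum_congr rfl fun j _ => by ring

/-- The two alternative reservoir input terms of the generalized harmonic model —
deterministic input `θ*` vs. Gamma-sampled input — have equal Gamma-averages on all
monomials; consequently the two reservoir generators `L^{(1)}` and `L^{(2)}` have equal
Gamma-averages on all monomials. -/
theorem gamma_averaged_reservoirs_agree (s : ℝ) (hs : 0 < s) (n : ℕ) (θ θs : ℝ)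
    (hθ : 0 < θ) (hθs : 0 < θs) :
    (∀ x : ℝ, 0 < x →
      IntegrableOn (fun u : ℝ => u⁻¹ * Real.exp (-u) * ((x + u * θs) ^ n - x ^ n))
        (Set.Ioi 0) volume) ∧
    (∀ x : ℝ, 0 < x → ∀ y : ℝ, 0 < y →
      IntegrableOn (fun u : ℝ => u⁻¹ * (1 - u) ^ (2 * s - 1) * ((x + u * y) ^ n - x ^ n))
        (Set.Ioo 0 1) volume) ∧
    IntegrableOn (fun x : ℝ => gammaDens s θ x *
        ∫ u in Set.Ioi (0:ℝ), u⁻¹ * Real.exp (-u) * ((x + u * θs) ^ n - x ^ n))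
      (Set.Ioi 0) volume ∧
    IntegrableOn (fun q : ℝ × ℝ => gammaDens s θ q.1 * gammaDens s θs q.2 *
        ∫ u in Set.Ioo (0:ℝ) 1,
          u⁻¹ * (1 - u) ^ (2 * s - 1) * ((q.1 + u * q.2) ^ n - q.1 ^ n))
      (Set.Ioi 0 ×ˢ Set.Ioi 0) volume ∧
    (∫ x in Set.Ioi (0:ℝ), gammaDens s θ x *
        ∫ u in Set.Ioi (0:ℝ), u⁻¹ * Real.exp (-u) * ((x + u * θs) ^ n - x ^ n))
      = (∫ x in Set.Ioi (0:ℝ), ∫ y in Set.Ioi (0:ℝ),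
          gammaDens s θ x * gammaDens s θs y *
            ∫ u in Set.Ioo (0:ℝ) 1,
              u⁻¹ * (1 - u) ^ (2 * s - 1) * ((x + u * y) ^ n - x ^ n)) ∧
    (∫ x in Set.Ioi (0:ℝ), gammaDens s θ x *
        ((∫ u in Set.Ioo (0:ℝ) 1,
            u⁻¹ * (1 - u) ^ (2 * s - 1) * (((1 - u) * x) ^ n - x ^ n)) +
         (∫ u in Set.Ioi (0:ℝ), u⁻¹ * Real.exp (-u) * ((x + u * θs) ^ n - x ^ n))))
      = ∫ x in Set.Ioi (0:ℝ), gammaDens s θ x *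
          ((∫ u in Set.Ioo (0:ℝ) 1,
              u⁻¹ * (1 - u) ^ (2 * s - 1) * (((1 - u) * x) ^ n - x ^ n)) +
           (∫ y in Set.Ioi (0:ℝ), gammaDens s θs y *
              ∫ u in Set.Ioo (0:ℝ) 1,
                u⁻¹ * (1 - u) ^ (2 * s - 1) * ((x + u * y) ^ n - x ^ n))) := by
  have hinput := integral_expKernel_increment_eq_integral_gammaDens_mul hs hθs n
  refine ⟨fun x _ => integrableOn_expKernel_increment n x θs,
    fun x _ y _ => integrableOn_betaKernel_increment (by positivity) n x y,
    integrableOn_gammaDens_mul_integral_expKernel_increment hs hθ n θs,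
    integrableOn_gammaDens_mul_gammaDens_mul_integral_betaKernel_increment hs hθ hθs n, ?_, ?_⟩
  · refine setIntegral_congr_fun measurableSet_Ioi fun x _ => ?_
    simp_rw [hinput x, ← integral_const_mul, mul_assoc]
  · refine setIntegral_congr_fun measurableSet_Ioi fun x _ => ?_
    rw [hinput x]
end
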